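/- arXiv:2009.06455 — 2 statements merged into one kernel-verified Lean document; each statement's English description precedes it below -/
import Mathlib

section
/- The function w(M,N) = (1/(2π))(L(MN,Z) - L(M,NZ) - L(N,Z)) is independent of Z and takes integer values, for all M, N in Sp(g,ℝ). -/
open Matrix Complex

noncomputable section

/-- The space of `2g × 2g` real matrices (symplectic candidates). -/
abbrev SpMat (g : ℕ) := Matrix (Fin g ⊕ Fin g) (Fin g ⊕ Fin g) ℝ

/-- The Siegel upper half plane of genus `g`: symmetric complex matrices with
positive definite imaginary part. -/
def SiegelUHP (g : ℕ) : Set (Matrix (Fin g) (Fin g) ℂ) :=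
  {Z | Z.IsSymm ∧ Matrix.PosDef (Matrix.of fun i j => (Z i j).im)}

/-- Coercion of a real matrix to a complex matrix. -/
def cmat {g : ℕ} (A : Matrix (Fin g) (Fin g) ℝ) : Matrix (Fin g) (Fin g) ℂ :=
  A.map (fun x => (x : ℂ))

/-- The automorphy factor `J(M,Z) = det (C Z + D)`. -/
def Jfac {g : ℕ} (M : SpMat g) (Z : Matrix (Fin g) (Fin g) ℂ) : ℂ :=
  (cmat M.toBlocks₂₁ * Z + cmat M.toBlocks₂₂).det

/-- The action `M⟨Z⟩ = (A Z + B)(C Z + D)⁻¹` on the Siegel upper half plane. -/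
def spAct {g : ℕ} (M : SpMat g) (Z : Matrix (Fin g) (Fin g) ℂ) :
    Matrix (Fin g) (Fin g) ℂ :=
  (cmat M.toBlocks₁₁ * Z + cmat M.toBlocks₁₂) *
    (cmat M.toBlocks₂₁ * Z + cmat M.toBlocks₂₂)⁻¹

/-- The base point `i·E` of the Siegel upper half plane. -/
def iE (g : ℕ) : Matrix (Fin g) (Fin g) ℂ := Complex.I • 1

/-- `L` is a continuous branch of `arg J(M, ·)` on the Siegel upper half plane,
normalized to the principal value at `Z = iE`. -/
def IsArgBranch (g : ℕ) (L : SpMat g → Matrix (Fin g) (Fin g) ℂ → ℝ) : Prop :=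
  (∀ M ∈ Matrix.symplecticGroup (Fin g) ℝ, ContinuousOn (L M) (SiegelUHP g)) ∧
  (∀ M ∈ Matrix.symplecticGroup (Fin g) ℝ, ∀ Z ∈ SiegelUHP g,
      ((‖Jfac M Z‖ : ℝ) : ℂ) * Complex.exp (Complex.I * (L M Z)) = Jfac M Z) ∧
  (∀ M ∈ Matrix.symplecticGroup (Fin g) ℝ, L M (iE g) = Complex.arg (Jfac M (iE g)))

/-- The cocycle `w(M,N) = (1/2π)(L(MN,Z) - L(M,NZ) - L(N,Z))`, evaluated at the
base point `Z = iE` (it is independent of `Z`). -/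
def wcoc {g : ℕ} (L : SpMat g → Matrix (Fin g) (Fin g) ℂ → ℝ) (M N : SpMat g) : ℝ :=
  (L (M * N) (iE g) - L M (spAct N (iE g)) - L N (iE g)) / (2 * Real.pi)

/-!
Write `P = AZ + B` and `Q = CZ + D` for the blocks of a real symplectic `M`. The symplectic
relations give `PᵀQ = QᵀP` and `PᴴQ - QᴴP = Zᴴ - Z`. For `Z` in `H_g` the second identity makes
`Q` invertible and shows `Im M⟨Z⟩ = Q⁻ᴴ (Im Z) Q⁻¹`, so `M⟨Z⟩ = PQ⁻¹` lies in `H_g` again; the block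
form of `MN` gives the cocycle relation `J(MN, Z) = J(M, N⟨Z⟩) J(N, Z)`. So the combination
`L(MN,Z) - L(M,N⟨Z⟩) - L(N,Z)` vanishes modulo `2π`, and being continuous on the convex set `H_g`
it is a constant multiple of `2π`.
-/

open scoped ComplexOrder

lemma I_div_two_smul_conjTranspose_sub_self {n : Type*} {Z : Matrix n n ℂ} (hZ : Zᵀ = Z) :
    (I / 2) • (Zᴴ - Z) = (Z.map im).map ((↑) : ℝ → ℂ) := by
  ext i j
  have hji : Z j i = Z i j := congrFun (congrFun hZ i) j
  apply Complex.ext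
  · simp [hji]; ring
  · simp [hji]

section

variable {n : Type*} [Fintype n]

lemma posDef_map_ofReal_iff {Y : Matrix n n ℝ} :
    (Y.map ((↑) : ℝ → ℂ)).PosDef ↔ Y.PosDef := by
  have hre (a b : n → ℝ) : RCLike.re (star (fun i => (a i + b i * I : ℂ)) ⬝ᵥ
      (Y.map ((↑) : ℝ → ℂ) *ᵥ fun i => (a i + b i * I : ℂ))) =
        a ⬝ᵥ (Y *ᵥ a) + b ⬝ᵥ (Y *ᵥ b) := by
    simp [dotProduct, mulVec, Finset.mul_sum, ← Finset.sum_add_distrib]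
  have hherm : (Y.map ((↑) : ℝ → ℂ)).IsHermitian ↔ Y.IsHermitian :=
    isHermitian_map_iff (fun _ => (conj_ofReal _).symm) ofReal_injective
  constructor
  · intro h
    refine PosDef.of_dotProduct_mulVec_pos (hherm.1 h.1) fun a ha => ?_
    have hpos := h.re_dotProduct_pos (x := fun i => (a i + (0 : n → ℝ) i * I : ℂ))
      fun h0 => ha (funext fun i => by simpa using congrFun h0 i)
    rw [hre] at hpos
    simpa using hpos
  · intro h
    refine PosDef.of_dotProduct_mulVec_pos (hherm.2 h.1) fun x hx => ?_
    have hx' : x = fun i => ((x i).re + (x i).im * I : ℂ) := funext fun i => (re_add_im _).symm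
    refine RCLike.pos_iff.2 ⟨?_, (hherm.2 h.1).im_star_dotProduct_mulVec_self x⟩
    rw [hx', hre]
    have hq (v : n → ℝ) : 0 ≤ v ⬝ᵥ (Y *ᵥ v) := by
      simpa using h.posSemidef.dotProduct_mulVec_nonneg v
    have hq' {v : n → ℝ} (hv : v ≠ 0) : 0 < v ⬝ᵥ (Y *ᵥ v) := by
      simpa using h.dotProduct_mulVec_pos hv
    by_cases hre0 : (fun i => (x i).re) = 0
    · have him0 : (fun i => (x i).im) ≠ 0 := fun him0 =>
        hx (funext fun i => Complex.ext (congrFun hre0 i) (congrFun him0 i))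
      linarith [hq fun i => (x i).re, hq' him0]
    · linarith [hq' hre0, hq fun i => (x i).im]

variable [DecidableEq n]

lemma SymplecticGroup.fromBlocks_pairing {R : Type*} [CommRing R] {A B C D : Matrix n n R}
    (h : fromBlocks A B C D ∈ symplecticGroup n R) (X Z : Matrix n n R) :
    (X * Aᵀ + Bᵀ) * (C * Z + D) - (X * Cᵀ + Dᵀ) * (A * Z + B) = X - Z := by
  obtain ⟨hAC, hBD, hAD⟩ := SymplecticGroup.fromBlocks_mem_iff.1 h
  have hDA : Dᵀ * A - Bᵀ * C = 1 := by
    simpa [transpose_sub, transpose_mul] using congrArg transpose hAD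
  calc (X * Aᵀ + Bᵀ) * (C * Z + D) - (X * Cᵀ + Dᵀ) * (A * Z + B)
      = X * (Aᵀ * C - Cᵀ * A) * Z + X * (Aᵀ * D - Cᵀ * B) - (Dᵀ * A - Bᵀ * C) * Z
          + (Bᵀ * D - Dᵀ * B) := by noncomm_ring
    _ = X - Z := by rw [hAC, hBD, hAD, hDA]; noncomm_ring

lemma transpose_mul_inv_eq_self {P Q : Matrix n n ℂ} (hQ : IsUnit Q.det)
    (h : Pᵀ * Q = Qᵀ * P) : (P * Q⁻¹)ᵀ = P * Q⁻¹ := by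
  have hQt : IsUnit Qᵀ.det := by rwa [det_transpose]
  rw [transpose_mul, transpose_nonsing_inv]
  calc (Qᵀ)⁻¹ * Pᵀ = (Qᵀ)⁻¹ * (Pᵀ * Q) * Q⁻¹ := by
        rw [Matrix.mul_assoc, Matrix.mul_assoc, mul_nonsing_inv _ hQ, Matrix.mul_one]
    _ = P * Q⁻¹ := by
        rw [h, ← Matrix.mul_assoc, nonsing_inv_mul _ hQt, Matrix.one_mul]

lemma conjTranspose_mul_inv_sub {P Q : Matrix n n ℂ} (hQ : IsUnit Q.det) :
    (P * Q⁻¹)ᴴ - P * Q⁻¹ = (Q⁻¹)ᴴ * (Pᴴ * Q - Qᴴ * P) * Q⁻¹ := by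
  have hQh : (Q⁻¹)ᴴ * Qᴴ = 1 := by
    rw [← conjTranspose_mul, mul_nonsing_inv _ hQ, conjTranspose_one]
  rw [conjTranspose_mul, Matrix.mul_sub, Matrix.sub_mul, ← Matrix.mul_assoc, ← Matrix.mul_assoc,
    hQh, Matrix.one_mul, Matrix.mul_assoc, Matrix.mul_assoc, mul_nonsing_inv _ hQ, Matrix.mul_one]

end

section

variable {l m R : Type*} [Fintype l] [Fintype m] [NonUnitalNonAssocSemiring R]

lemma toBlocks₂₁_mul (M N : Matrix (l ⊕ m) (l ⊕ m) R) :
    (M * N).toBlocks₂₁ = M.toBlocks₂₁ * N.toBlocks₁₁ + M.toBlocks₂₂ * N.toBlocks₂₁ := by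
  ext i j
  simp [toBlocks₂₁, toBlocks₁₁, toBlocks₂₂, mul_apply, Fintype.sum_sum_type]

lemma toBlocks₂₂_mul (M N : Matrix (l ⊕ m) (l ⊕ m) R) :
    (M * N).toBlocks₂₂ = M.toBlocks₂₁ * N.toBlocks₁₂ + M.toBlocks₂₂ * N.toBlocks₂₂ := by
  ext i j
  simp [toBlocks₂₁, toBlocks₁₂, toBlocks₂₂, mul_apply, Fintype.sum_sum_type]

end

section

variable {g : ℕ}

-- Writing `Im Z` as `(I / 2) • (Zᴴ - Z)` lets the positivity arguments run over `ℂ`.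
lemma mem_siegelUHP_iff {Z : Matrix (Fin g) (Fin g) ℂ} :
    Z ∈ SiegelUHP g ↔ Zᵀ = Z ∧ ((I / 2) • (Zᴴ - Z)).PosDef := by
  refine and_congr_right fun hZ => ?_
  rw [I_div_two_smul_conjTranspose_sub_self hZ, posDef_map_ofReal_iff]
  rfl

lemma convex_siegelUHP (g : ℕ) : Convex ℝ (SiegelUHP g) := by
  refine convex_iff_forall_pos.2 fun Z₁ h₁ Z₂ h₂ a b ha hb _ => ⟨?_, ?_⟩
  · change (a • Z₁ + b • Z₂)ᵀ = a • Z₁ + b • Z₂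
    rw [transpose_add, transpose_smul, transpose_smul, h₁.1, h₂.1]
  · have him : (Matrix.of fun i j => ((a • Z₁ + b • Z₂) i j).im)
        = a • (Matrix.of fun i j => (Z₁ i j).im) + b • Matrix.of fun i j => (Z₂ i j).im := by
      ext i j; simp
    rw [him]
    exact (h₁.2.smul ha).add (h₂.2.smul hb)

def spNum (M : SpMat g) (Z : Matrix (Fin g) (Fin g) ℂ) : Matrix (Fin g) (Fin g) ℂ :=
  cmat M.toBlocks₁₁ * Z + cmat M.toBlocks₁₂

def spDen (M : SpMat g) (Z : Matrix (Fin g) (Fin g) ℂ) : Matrix (Fin g) (Fin g) ℂ :=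
  cmat M.toBlocks₂₁ * Z + cmat M.toBlocks₂₂

lemma Jfac_eq_det_spDen (M : SpMat g) (Z : Matrix (Fin g) (Fin g) ℂ) :
    Jfac M Z = (spDen M Z).det := rfl

lemma spAct_eq (M : SpMat g) (Z : Matrix (Fin g) (Fin g) ℂ) :
    spAct M Z = spNum M Z * (spDen M Z)⁻¹ := rfl

lemma cmat_mul (A B : Matrix (Fin g) (Fin g) ℝ) : cmat (A * B) = cmat A * cmat B :=
  Matrix.map_mul (f := ofRealHom)

lemma cmat_add (A B : Matrix (Fin g) (Fin g) ℝ) : cmat (A + B) = cmat A + cmat B :=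
  Matrix.map_add _ (fun _ _ => ofReal_add _ _) _ _

lemma conjTranspose_cmat (A : Matrix (Fin g) (Fin g) ℝ) : (cmat A)ᴴ = (cmat A)ᵀ := by
  ext i j; simp [cmat]

lemma fromBlocks_cmat_mem {M : SpMat g} (hM : M ∈ symplecticGroup (Fin g) ℝ) :
    fromBlocks (cmat M.toBlocks₁₁) (cmat M.toBlocks₁₂) (cmat M.toBlocks₂₁) (cmat M.toBlocks₂₂)
      ∈ symplecticGroup (Fin g) ℂ := by
  have h := SymplecticGroup.map_mem hM ofRealHom
  rwa [← fromBlocks_toBlocks (M.map ofRealHom)] at h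

lemma spNum_transpose_mul_spDen {M : SpMat g} (hM : M ∈ symplecticGroup (Fin g) ℝ)
    {Z : Matrix (Fin g) (Fin g) ℂ} (hZ : Zᵀ = Z) :
    (spNum M Z)ᵀ * spDen M Z = (spDen M Z)ᵀ * spNum M Z := by
  have h := SymplecticGroup.fromBlocks_pairing (fromBlocks_cmat_mem hM) Z Z
  rw [sub_self, sub_eq_zero] at h
  simpa [spNum, spDen, transpose_add, transpose_mul, hZ] using h

lemma spNum_conjTranspose_mul_spDen_sub {M : SpMat g} (hM : M ∈ symplecticGroup (Fin g) ℝ)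
    (Z : Matrix (Fin g) (Fin g) ℂ) :
    (spNum M Z)ᴴ * spDen M Z - (spDen M Z)ᴴ * spNum M Z = Zᴴ - Z := by
  simpa [spNum, spDen, conjTranspose_add, conjTranspose_mul, conjTranspose_cmat]
    using SymplecticGroup.fromBlocks_pairing (fromBlocks_cmat_mem hM) Zᴴ Z

lemma Jfac_ne_zero {M : SpMat g} (hM : M ∈ symplecticGroup (Fin g) ℝ)
    {Z : Matrix (Fin g) (Fin g) ℂ} (hZ : Z ∈ SiegelUHP g) : Jfac M Z ≠ 0 := by
  intro h0
  rw [Jfac_eq_det_spDen] at h0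
  obtain ⟨v, hv, hQv⟩ := exists_mulVec_eq_zero_iff.2 h0
  have hpos := (mem_siegelUHP_iff.1 hZ).2.dotProduct_mulVec_pos hv
  have hzero : star v ⬝ᵥ ((Zᴴ - Z) *ᵥ v) = 0 := by
    rw [← spNum_conjTranspose_mul_spDen_sub hM, sub_mulVec, ← mulVec_mulVec, ← mulVec_mulVec,
      hQv, mulVec_zero, dotProduct_sub, dotProduct_zero, zero_sub, neg_eq_zero,
      dotProduct_mulVec, vecMul_conjTranspose, star_star, hQv, star_zero, zero_dotProduct]
  rw [smul_mulVec, dotProduct_smul, hzero, smul_zero] at hpos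
  exact lt_irrefl _ hpos

lemma spAct_mem {M : SpMat g} (hM : M ∈ symplecticGroup (Fin g) ℝ)
    {Z : Matrix (Fin g) (Fin g) ℂ} (hZ : Z ∈ SiegelUHP g) : spAct M Z ∈ SiegelUHP g := by
  obtain ⟨hZs, hY⟩ := mem_siegelUHP_iff.1 hZ
  have hQ : IsUnit (spDen M Z).det := (Jfac_ne_zero hM hZ).isUnit
  refine mem_siegelUHP_iff.2
    ⟨transpose_mul_inv_eq_self hQ (spNum_transpose_mul_spDen hM hZs), ?_⟩
  rw [spAct_eq, conjTranspose_mul_inv_sub hQ, spNum_conjTranspose_mul_spDen_sub hM,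
    ← Matrix.smul_mul, ← Matrix.mul_smul]
  exact hY.conjTranspose_mul_mul_same
    (mulVec_injective_of_isUnit (isUnit_nonsing_inv_iff.2 ((isUnit_iff_isUnit_det _).2 hQ)))

lemma spDen_mul (M N : SpMat g) (Z : Matrix (Fin g) (Fin g) ℂ) :
    spDen (M * N) Z = cmat M.toBlocks₂₁ * spNum N Z + cmat M.toBlocks₂₂ * spDen N Z := by
  simp only [spDen, spNum, toBlocks₂₁_mul, toBlocks₂₂_mul, cmat_add, cmat_mul]
  noncomm_ring

lemma Jfac_mul (M : SpMat g) {N : SpMat g} {Z : Matrix (Fin g) (Fin g) ℂ} (hN : Jfac N Z ≠ 0) :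
    Jfac (M * N) Z = Jfac M (spAct N Z) * Jfac N Z := by
  have hQ : IsUnit (spDen N Z).det := hN.isUnit
  rw [Jfac_eq_det_spDen, Jfac_eq_det_spDen, Jfac_eq_det_spDen, ← det_mul, spDen_mul, spAct_eq]
  conv_rhs => rw [spDen, Matrix.add_mul, Matrix.mul_assoc, Matrix.mul_assoc,
    nonsing_inv_mul _ hQ, Matrix.mul_one]

lemma continuousOn_spAct {M : SpMat g} (hM : M ∈ symplecticGroup (Fin g) ℝ) :
    ContinuousOn (spAct M) (SiegelUHP g) := by
  have hNum : Continuous (spNum M) := by unfold spNum; fun_prop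
  have hDen : Continuous (spDen M) := by unfold spDen; fun_prop
  refine hNum.continuousOn.mul fun Z hZ => ?_
  refine ((continuousAt_matrix_inv _ ?_).comp hDen.continuousAt).continuousWithinAt
  rw [Ring.inverse_eq_inv']
  exact continuousAt_inv₀ (Jfac_ne_zero hM hZ)

end

lemma coe_angle_eq_arg_of_norm_mul_exp {z : ℂ} (hz : z ≠ 0) {θ : ℝ}
    (h : (‖z‖ : ℂ) * exp (I * θ) = z) : (θ : Real.Angle) = arg z := by
  rw [← h, arg_real_mul _ (norm_pos_iff.2 hz), arg_exp]
  simp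

lemma IsPreconnected.exists_int_eq_two_pi_mul {α : Type*} [TopologicalSpace α] {S : Set α}
    (hS : IsPreconnected S) {f : α → ℝ} (hf : ContinuousOn f S)
    (h : ∀ x ∈ S, (f x : Real.Angle) = 0) : ∃ k : ℤ, ∀ x ∈ S, f x = 2 * Real.pi * k := by
  have hdisc : IsDiscrete (AddSubgroup.zmultiples (2 * Real.pi) : Set ℝ) :=
    isDiscrete_iff_discreteTopology.2
      (inferInstanceAs (DiscreteTopology (AddSubgroup.zmultiples (2 * Real.pi))))
  obtain ⟨y, hy, hfy⟩ := hS.eqOn_const_of_mapsTo hdisc hf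
    (fun x hx => AddSubgroup.mem_zmultiples_iff.2 (Real.Angle.coe_eq_zero_iff.1 (h x hx)))
    ⟨0, zero_mem _⟩
  obtain ⟨k, rfl⟩ := AddSubgroup.mem_zmultiples_iff.1 hy
  exact ⟨k, fun x hx => by rw [hfy hx, Function.const_apply, zsmul_eq_mul, mul_comm]⟩

/-- The function `w(M,N) = (1/2π)(L(MN,Z) - L(M,NZ) - L(N,Z))` is independent of
`Z` and takes integer values, for all `M, N ∈ Sp(g,ℝ)`. -/
theorem w_integer_and_Z_independent (g : ℕ)
    (L : SpMat g → Matrix (Fin g) (Fin g) ℂ → ℝ) (hL : IsArgBranch g L)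
    (M : SpMat g) (hM : M ∈ Matrix.symplecticGroup (Fin g) ℝ)
    (N : SpMat g) (hN : N ∈ Matrix.symplecticGroup (Fin g) ℝ) :
    ∃ k : ℤ, ∀ Z ∈ SiegelUHP g,
      L (M * N) Z - L M (spAct N Z) - L N Z = 2 * Real.pi * k := by
  obtain ⟨hcont, hlift, -⟩ := hL
  have hMN := mul_mem hM hN
  have hangle {K : SpMat g} (hK : K ∈ symplecticGroup (Fin g) ℝ) {Z} (hZ : Z ∈ SiegelUHP g) :
      (L K Z : Real.Angle) = arg (Jfac K Z) :=
    coe_angle_eq_arg_of_norm_mul_exp (Jfac_ne_zero hK hZ) (hlift K hK Z hZ)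
  have hcontΔ : ContinuousOn (fun Z => L (M * N) Z - L M (spAct N Z) - L N Z) (SiegelUHP g) :=
    ((hcont _ hMN).sub ((hcont M hM).comp (continuousOn_spAct hN) fun Z hZ => spAct_mem hN hZ)).sub
      (hcont N hN)
  refine (convex_siegelUHP g).isPreconnected.exists_int_eq_two_pi_mul hcontΔ fun Z hZ => ?_
  rw [Real.Angle.coe_sub, Real.Angle.coe_sub, hangle hMN hZ, hangle hM (spAct_mem hN hZ),
    hangle hN hZ, Jfac_mul M (Jfac_ne_zero hN hZ),
    arg_mul_coe_angle (Jfac_ne_zero hM (spAct_mem hN hZ)) (Jfac_ne_zero hN hZ)]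
  abel
end
end

section
/- Let g = 2, I the standard symplectic involution (0 -E; E 0), and M = (E S; 0 E) with S a real symmetric 2×2 matrix. Then w(I,M) = 0 if tr(S) ≥ 0 and w(I,M) = -1 if tr(S) < 0. -/
open Matrix Complex

noncomputable section

/-!
Along the segment `Z t = iE + t S`, `t ∈ [0, 1]`, the automorphy factor of `I` is
`det Z t = t² det S - 1 + i t tr S`. It never lies in `[0, ∞)`: a real value forces `t = 0` or
`tr S = 0`, and then `det S = -(S₀₀² + S₀₁²) ≤ 0`. So `t ↦ arg (-det Z t) + π` is a
continuous lift of `arg det Z t` starting at `π = L(I, iE)`, and by uniqueness of lifts it is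
`L(I, Z t)`. Hence `2π w(I, M) = arg z - arg (-z) - π` for `z = det (iE + S)`, which is `0` or
`-2π` according to the sign of `Im z = tr S`.
-/

open scoped Real

theorem eq_of_continuousOn_of_exp_mul_I_eq {X : Type*} [TopologicalSpace X] {s : Set X}
    (hs : IsPreconnected s) {f g : X → ℝ} (hf : ContinuousOn f s) (hg : ContinuousOn g s)
    (hfg : ∀ x ∈ s, exp (I * f x) = exp (I * g x)) {a b : X} (ha : a ∈ s) (hb : b ∈ s)
    (hab : f a = g a) : f b = g b := by
  have hmaps : Set.MapsTo (f - g) s (AddSubgroup.zmultiples (2 * π)) := by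
    intro x hx
    obtain ⟨n, hn⟩ := exp_eq_exp_iff_exists_int.mp (hfg x hx)
    refine ⟨n, ?_⟩
    have him : f x = g x + n * (2 * π) := by simpa using congrArg Complex.im hn
    simp [him]
  have hconst := hs.constant_of_mapsTo (isDiscrete_iff_discreteTopology.mpr
    (inferInstanceAs (DiscreteTopology (AddSubgroup.zmultiples (2 * π))))) (hf.sub hg) hmaps ha hb
  simp only [Pi.sub_apply] at hconst
  linarith

theorem arg_sub_arg_neg_sub_pi {z : ℂ} (hz : -z ∈ slitPlane) :
    arg z - (arg (-z) + π) = (if 0 ≤ z.im then 0 else -1) * (2 * π) := by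
  rw [mem_slitPlane_iff, neg_re, neg_im, neg_pos, ne_eq, neg_eq_zero] at hz
  split_ifs with him
  · rw [arg_neg_eq_arg_sub_pi_iff.mpr (by grind)]
    ring
  · rw [arg_neg_eq_arg_add_pi_iff.mpr (Or.inl (not_le.mp him))]
    ring

section

variable {g : ℕ}

@[simp] theorem cmat_zero : cmat (0 : Matrix (Fin g) (Fin g) ℝ) = 0 :=
  Matrix.map_zero _ ofReal_zero

@[simp] theorem cmat_one : cmat (1 : Matrix (Fin g) (Fin g) ℝ) = 1 :=
  Matrix.map_one _ ofReal_zero ofReal_one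

@[fun_prop] theorem continuous_cmat : Continuous (cmat : Matrix (Fin g) (Fin g) ℝ → _) := by
  unfold cmat
  fun_prop

theorem continuous_Jfac (M : SpMat g) : Continuous (Jfac M) := by
  unfold Jfac
  fun_prop

@[simp] theorem Jfac_fromBlocks (A B C D : Matrix (Fin g) (Fin g) ℝ)
    (Z : Matrix (Fin g) (Fin g) ℂ) :
    Jfac (fromBlocks A B C D) Z = (cmat C * Z + cmat D).det := by
  simp [Jfac]

@[simp] theorem spAct_fromBlocks (A B C D : Matrix (Fin g) (Fin g) ℝ)
    (Z : Matrix (Fin g) (Fin g) ℂ) :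
    spAct (fromBlocks A B C D) Z = (cmat A * Z + cmat B) * (cmat C * Z + cmat D)⁻¹ := by
  simp [spAct]

theorem iE_add_cmat_mem_siegelUHP {A : Matrix (Fin g) (Fin g) ℝ} (hA : A.IsSymm) :
    iE g + cmat A ∈ SiegelUHP g := by
  refine ⟨?_, ?_⟩
  · ext i j
    simp [iE, cmat, Matrix.one_apply, eq_comm, hA.apply i j]
  · convert Matrix.PosDef.one (n := Fin g) (R := ℝ)
    ext i j
    simp [iE, cmat, Matrix.one_apply, apply_ite]

end

theorem fromBlocks_one_mem_symplecticGroup {l R : Type*} [Fintype l] [DecidableEq l] [CommRing R]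
    {S : Matrix l l R} (hS : S.IsSymm) :
    fromBlocks 1 S 0 1 ∈ symplecticGroup l R := by
  rw [SymplecticGroup.mem_iff, Matrix.J, fromBlocks_transpose, fromBlocks_multiply,
    fromBlocks_multiply]
  simp [hS.eq]

theorem IsArgBranch.eq_arg_neg_add_pi {g : ℕ} {L : SpMat g → Matrix (Fin g) (Fin g) ℂ → ℝ}
    (hL : IsArgBranch g L) {M : SpMat g} (hM : M ∈ symplecticGroup (Fin g) ℝ)
    {s : Set (Matrix (Fin g) (Fin g) ℂ)} (hs : IsPreconnected s) (hsU : s ⊆ SiegelUHP g)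
    (hslit : ∀ Z ∈ s, -Jfac M Z ∈ slitPlane) {Z₀ Z : Matrix (Fin g) (Fin g) ℂ}
    (hZ₀ : Z₀ ∈ s) (h₀ : L M Z₀ = arg (-Jfac M Z₀) + π) (hZ : Z ∈ s) :
    L M Z = arg (-Jfac M Z) + π := by
  refine eq_of_continuousOn_of_exp_mul_I_eq (g := fun Z => arg (-Jfac M Z) + π) hs
    ((hL.1 M hM).mono hsU) ?_ ?_ hZ₀ hZ h₀
  · refine continuousOn_of_forall_continuousAt fun Z hZ => ?_
    exact ((continuousAt_arg (hslit Z hZ)).comp (f := fun Z => -Jfac M Z)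
      (continuous_Jfac M).neg.continuousAt).add continuousAt_const
  · intro Z hZ
    have hJ : ((‖Jfac M Z‖ : ℝ) : ℂ) ≠ 0 := by
      simpa using slitPlane_ne_zero (hslit Z hZ)
    refine mul_left_cancel₀ hJ ?_
    rw [hL.2.1 M hM Z (hsU hZ), ofReal_add, mul_add, exp_add, mul_comm I, mul_comm I,
      exp_pi_mul_I, ← norm_neg, ← mul_assoc, norm_mul_exp_arg_mul_I]
    ring

theorem det_iE_two_add_cmat (S : Matrix (Fin 2) (Fin 2) ℝ) :
    (iE 2 + cmat S).det = ⟨S.det - 1, S.trace⟩ := by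
  rw [det_fin_two, det_fin_two, trace_fin_two]
  apply Complex.ext
  · simp [iE, cmat]
    ring
  · simp [iE, cmat]

theorem neg_det_iE_two_add_cmat_mem_slitPlane {S : Matrix (Fin 2) (Fin 2) ℝ} (hS : S.IsSymm) :
    -(iE 2 + cmat S).det ∈ slitPlane := by
  rw [det_iE_two_add_cmat, mem_slitPlane_iff]
  by_cases htr : S.trace = 0
  · left
    rw [trace_fin_two] at htr
    have h10 : S 1 0 = S 0 1 := hS.apply 0 1
    simp only [neg_re, det_fin_two, h10, show S 1 1 = -S 0 0 by linarith]
    nlinarith [sq_nonneg (S 0 0), sq_nonneg (S 0 1)]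
  · right
    simpa using htr

/-- For `g = 2`, `I = (0 -E; E 0)` and `M = (E S; 0 E)` with `S` real symmetric:
`w(I,M) = 0` if `tr S ≥ 0` and `w(I,M) = -1` if `tr S < 0`. -/
theorem w_I_translation
    (L : SpMat 2 → Matrix (Fin 2) (Fin 2) ℂ → ℝ) (hL : IsArgBranch 2 L)
    (S : Matrix (Fin 2) (Fin 2) ℝ) (hS : S.IsSymm) :
    wcoc L (Matrix.fromBlocks 0 (-1) 1 0) (Matrix.fromBlocks 1 S 0 1) =
      if 0 ≤ S.trace then 0 else -1 := by
  have hJ : (fromBlocks 0 (-1) 1 0 : SpMat 2) ∈ symplecticGroup (Fin 2) ℝ :=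
    SymplecticGroup.J_mem _ _
  have hT := fromBlocks_one_mem_symplecticGroup hS
  set path : ℝ → Matrix (Fin 2) (Fin 2) ℂ := fun t => iE 2 + cmat (t • S)
  have hlift : L (fromBlocks 0 (-1) 1 0) (path 1) =
      arg (-Jfac (fromBlocks 0 (-1) 1 0) (path 1)) + π := by
    refine hL.eq_arg_neg_add_pi hJ
      (isPreconnected_Icc.image path (by unfold path iE; fun_prop)) ?_ ?_
      (Set.mem_image_of_mem path (Set.left_mem_Icc.2 zero_le_one)) ?_
      (Set.mem_image_of_mem path (Set.right_mem_Icc.2 zero_le_one))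
    · rintro _ ⟨t, -, rfl⟩
      exact iE_add_cmat_mem_siegelUHP (hS.smul t)
    · rintro _ ⟨t, -, rfl⟩
      simpa using neg_det_iE_two_add_cmat_mem_slitPlane (hS.smul t)
    · rw [show path 0 = iE 2 by simp [path], hL.2.2 _ hJ]
      simp [iE]
  have hprod :
      (fromBlocks 0 (-1) 1 0 : SpMat 2) * fromBlocks 1 S 0 1 = fromBlocks 0 (-1) 1 S := by
    simp [fromBlocks_multiply]
  rw [wcoc, hprod, hL.2.2 _ (hprod ▸ mul_mem hJ hT), hL.2.2 _ hT]
  simp only [path, one_smul, Jfac_fromBlocks, spAct_fromBlocks, cmat_zero, cmat_one, zero_mul,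
    one_mul, zero_add, add_zero, inv_one, mul_one, det_one, arg_one, sub_zero] at hlift ⊢
  rw [hlift, arg_sub_arg_neg_sub_pi (neg_det_iE_two_add_cmat_mem_slitPlane hS),
    det_iE_two_add_cmat]
  exact mul_div_cancel_right₀ _ Real.two_pi_pos.ne'
end
end
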